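/- The group G₂ admits a left-invariant linear order: there exists a linear order ≤ on G₂ such that for all g, h, k ∈ G₂, h ≤ k implies g·h ≤ g·k. -/

import Mathlib

/-- The group `G₂ = ⟨α, β, γ ∣ αβα⁻¹ = β⁻¹, βγβ⁻¹ = γ⁻¹⟩`, as the presented
group on three generators with relators `αβα⁻¹β` and `βγβ⁻¹γ`. -/
abbrev G₂ : Type :=
  PresentedGroup ({FreeGroup.of 0 * FreeGroup.of 1 * (FreeGroup.of 0)⁻¹ * FreeGroup.of 1,
    FreeGroup.of 1 * FreeGroup.of 2 * (FreeGroup.of 1)⁻¹ * FreeGroup.of 2} :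
    Set (FreeGroup (Fin 3)))

/-!
`G₂` embeds into `F ⋊ K`, where `K = ⟨a, b ∣ aba⁻¹ = b⁻¹⟩ = ℤ ⋊ ℤ` is the Klein bottle group and
`F` is the free group on generators `x_k` (`k ∈ ℤ`), on which `a` acts by `x_k ↦ x_{k+1}` and `b`
by `x_k ↦ x_k⁻¹`: send `α ↦ a`, `β ↦ b`, `γ ↦ x_0`; a left inverse sends `x_k ↦ αᵏγα⁻ᵏ`.
Left-orderability passes to subgroups and to extensions (order the quotient first, then the
kernel), and `ℤ` is ordered, so it remains to order `F`.

For that we use the Magnus embedding `x_k ↦ 1 + X_k` of `F` into the group of noncommutative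
power series with integer coefficients and constant term `1`; it is injective because a reduced
word `x_{k₁}^{e₁} ⋯ x_{kₙ}^{eₙ}` has coefficient `e₁ ⋯ eₙ ≠ 0` at `X_{k₁} ⋯ X_{kₙ}`. Compare series
lexicographically along a well-order of the words refining their length: left multiplication by
a series with constant term `1` is unitriangular for this order, hence preserves it.
-/

open Finset

structure PositiveCone (G : Type*) [Group G] where
  carrier : Set G
  mul_mem {a b : G} : a ∈ carrier → b ∈ carrier → a * b ∈ carrier
  one_notMem : (1 : G) ∉ carrier
  mem_or_inv_mem {a : G} : a ≠ 1 → a ∈ carrier ∨ a⁻¹ ∈ carrier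

namespace PositiveCone

variable {G H : Type*} [Group G] [Group H]

theorem exists_linearOrder (P : PositiveCone G) :
    ∃ _ : LinearOrder G, ∀ g h k : G, h ≤ k → g * h ≤ g * k := by
  let lt : G → G → Prop := fun a b => a⁻¹ * b ∈ P.carrier
  have : IsStrictTotalOrder G lt :=
    { irrefl := fun a h => P.one_notMem (by simpa [lt] using h)
      trans := fun a b c hab hbc => by simpa [lt, mul_assoc] using P.mul_mem hab hbc
      trichotomous := fun a b hab hba => by
        by_contra hne
        rcases P.mem_or_inv_mem (a := a⁻¹ * b) (by simpa [inv_mul_eq_one] using hne) with h | h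
        · exact hab h
        · exact hba (by simpa [lt] using h) }
  let _ : DecidableRel lt := Classical.decRel _
  let _ : LinearOrder G := linearOrderOfSTO lt
  refine ⟨‹_›, fun g h k hhk => ?_⟩
  rcases hhk.lt_or_eq with hlt | rfl
  · have hlt : lt h k := hlt
    exact le_of_lt (show lt (g * h) (g * k) by simpa [lt, mul_assoc] using hlt)
  · exact le_rfl

def comap (P : PositiveCone H) (f : G →* H) (hf : Function.Injective f) : PositiveCone G where
  carrier := f ⁻¹' P.carrier
  mul_mem ha hb := by simpa using P.mul_mem ha hb
  one_notMem := by simpa using P.one_notMem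
  mem_or_inv_mem ha := by simpa using P.mem_or_inv_mem ((map_ne_one_iff f hf).2 ha)

def ofStrictMono {L : Type*} [LinearOrder L] (J : G → L) (hJ : Function.Injective J)
    (hmul : ∀ g {a b : G}, J a < J b → J (g * a) < J (g * b)) : PositiveCone G where
  carrier := {a | J 1 < J a}
  mul_mem {a b} ha hb := ha.trans (by simpa using hmul a hb)
  one_notMem := lt_irrefl _
  mem_or_inv_mem {a} ha := by
    rcases lt_or_gt_of_ne (hJ.ne ha) with h | h
    · exact Or.inr (by simpa using hmul a⁻¹ h)
    · exact Or.inl h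

def semidirectProduct {N : Type*} [Group N] {φ : G →* MulAut N} (PN : PositiveCone N)
    (PG : PositiveCone G) : PositiveCone (N ⋊[φ] G) where
  carrier := {x | x.right ∈ PG.carrier ∨ x.right = 1 ∧ x.left ∈ PN.carrier}
  mul_mem {x y} hx hy := by
    rcases hx with hx | ⟨hx1, hx⟩ <;> rcases hy with hy | ⟨hy1, hy⟩
    · exact Or.inl (PG.mul_mem hx hy)
    · exact Or.inl (by simpa [hy1] using hx)
    · exact Or.inl (by simpa [hx1] using hy)
    · exact Or.inr ⟨by simp [hx1, hy1], by simpa [hx1] using PN.mul_mem hx hy⟩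
  one_notMem := by
    rintro (h | ⟨-, h⟩)
    · exact PG.one_notMem h
    · exact PN.one_notMem h
  mem_or_inv_mem {x} hx := by
    by_cases hr : x.right = 1
    · have hl : x.left ≠ 1 := fun hl => hx (SemidirectProduct.ext hl hr)
      rcases PN.mem_or_inv_mem hl with h | h
      · exact Or.inl (Or.inr ⟨hr, h⟩)
      · exact Or.inr (Or.inr ⟨by simp [hr], by simpa [hr] using h⟩)
    · rcases PG.mem_or_inv_mem hr with h | h
      · exact Or.inl (Or.inl h)
      · exact Or.inr (Or.inl (by simpa using h))

end PositiveCone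

def Multiplicative.positiveCone (A : Type*) [AddCommGroup A] [LinearOrder A]
    [IsOrderedAddMonoid A] : PositiveCone (Multiplicative A) :=
  PositiveCone.ofStrictMono Multiplicative.toAdd Multiplicative.toAdd.injective
    fun g a b h => by simpa using add_lt_add_left h (Multiplicative.toAdd g)

theorem List.forall_mem_of_take_drop {α : Type*} {p : α → Prop} {w : List α} (k : ℕ)
    (h₁ : ∀ b ∈ w.take k, p b) (h₂ : ∀ b ∈ w.drop k, p b) : ∀ b ∈ w, p b := by
  rw [← List.take_append_drop k w]
  exact List.forall_mem_append.2 ⟨h₁, h₂⟩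

namespace Magnus

abbrev Series (α : Type*) : Type _ := List α → ℤ

namespace Series

variable {α : Type*}

protected def mul (f g : Series α) : Series α := fun w =>
  ∑ k ∈ range (w.length + 1), f (w.take k) * g (w.drop k)

protected def one [DecidableEq α] : Series α := Pi.single [] 1

-- Solves `f.inv.mul f = Series.one` for the coefficient at `w`, by recursion on the length of
-- `w`; it is a left inverse only when `f [] = 1`.
protected def inv (f : Series α) : Series α
  | w => if w = [] then 1 else -∑ k : Fin w.length, Series.inv f (w.take k) * f (w.drop k)
termination_by w => w.length
decreasing_by simp

protected theorem mul_assoc (f g h : Series α) : (f.mul g).mul h = f.mul (g.mul h) := by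
  funext w
  set L := w.length
  calc (f.mul g).mul h w
      = ∑ n ∈ range (L + 1), ∑ m ∈ range (n + 1),
          f (w.take m) * g ((w.drop m).take (n - m)) * h ((w.drop m).drop (n - m)) := by
        refine sum_congr rfl fun n hn => ?_
        have hn : n ≤ L := Nat.lt_succ_iff.1 (mem_range.1 hn)
        rw [Series.mul, sum_mul, List.length_take, min_eq_left hn]
        refine sum_congr rfl fun m hm => ?_
        have hm : m ≤ n := Nat.lt_succ_iff.1 (mem_range.1 hm)
        rw [List.take_take, min_eq_left hm, List.drop_take, List.drop_drop,
          Nat.add_sub_cancel' hm]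
    _ = ∑ m ∈ range (L + 1), ∑ n ∈ Ico m (L + 1),
          f (w.take m) * g ((w.drop m).take (n - m)) * h ((w.drop m).drop (n - m)) :=
        sum_comm' fun n m => by simp only [mem_range, mem_Ico]; omega
    _ = f.mul (g.mul h) w := by
        refine sum_congr rfl fun m hm => ?_
        have hm : m ≤ L := Nat.lt_succ_iff.1 (mem_range.1 hm)
        rw [Series.mul, List.length_drop, mul_sum, sum_Ico_eq_sum_range,
          show L + 1 - m = L - m + 1 by omega]
        refine sum_congr rfl fun j _ => ?_
        rw [Nat.add_sub_cancel_left, mul_assoc]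

protected theorem one_mul [DecidableEq α] (f : Series α) : Series.one.mul f = f := by
  funext w
  rw [Series.mul, sum_eq_single 0]
  · simp [Series.one]
  · intro k hk hk0
    have : w.take k ≠ [] := by
      rw [Ne, List.take_eq_nil_iff]
      rintro (h | rfl) <;> simp_all
    simp [Series.one, this]
  · simp

protected theorem inv_mul [DecidableEq α] (f : Series α) (hf : f [] = 1) :
    f.inv.mul f = Series.one := by
  funext w
  rcases eq_or_ne w [] with rfl | hw
  · simp [Series.mul, Series.one, Series.inv, hf]
  · rw [Series.mul, sum_range_succ, List.take_length, List.drop_length, hf, mul_one,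
      Series.inv, if_neg hw, sum_range fun k => f.inv (w.take k) * f (w.drop k)]
    simp [Series.one, hw]

theorem mul_nil (f g : Series α) : f.mul g [] = f [] * g [] := by
  simp [Series.mul]

theorem mul_singleton (f g : Series α) (a : α) :
    f.mul g [a] = f [] * g [a] + f [a] * g [] := by
  simp [Series.mul, sum_range_succ]

theorem mul_sub_mul_eq_of_eqOn_shorter (x f g : Series α) {w : List α}
    (h : ∀ v : List α, v.length < w.length → f v = g v) :
    x.mul f w - x.mul g w = x [] * (f w - g w) := by
  simp only [Series.mul, sum_range_succ', List.take_zero, List.drop_zero]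
  rw [sum_congr rfl fun k hk => by
    rw [h _ (by simp only [List.length_drop]; simp at hk; omega)]]
  ring

def SupportedOnLetter (a : α) (f : Series α) : Prop := ∀ w, f w ≠ 0 → ∀ b ∈ w, b = a

namespace SupportedOnLetter

variable {a : α} {f g : Series α}

theorem apply_eq_zero (hf : f.SupportedOnLetter a) {w : List α} {b : α} (hb : b ∈ w)
    (hba : b ≠ a) : f w = 0 :=
  by_contra fun h => hba (hf w h b hb)

theorem mul (hf : f.SupportedOnLetter a) (hg : g.SupportedOnLetter a) :
    (f.mul g).SupportedOnLetter a := fun w hw => by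
  obtain ⟨k, -, hk⟩ := exists_ne_zero_of_sum_ne_zero hw
  exact List.forall_mem_of_take_drop k (hf _ (left_ne_zero_of_mul hk))
    (hg _ (right_ne_zero_of_mul hk))

theorem inv (hf : f.SupportedOnLetter a) : f.inv.SupportedOnLetter a
  | w, hw => by
    rw [Series.inv] at hw
    split_ifs at hw with hnil
    · simp [hnil]
    obtain ⟨k, -, hk⟩ := exists_ne_zero_of_sum_ne_zero (neg_ne_zero.1 hw)
    exact List.forall_mem_of_take_drop k (hf.inv _ (left_ne_zero_of_mul hk))
      (hf _ (right_ne_zero_of_mul hk))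
termination_by w => w.length
decreasing_by simp

end SupportedOnLetter

end Series

end Magnus

@[ext]
structure MagnusGroup (α : Type*) where
  val : Magnus.Series α
  val_nil : val [] = 1

namespace MagnusGroup

open Magnus

section Algebra

variable {α : Type*}

instance : Mul (MagnusGroup α) :=
  ⟨fun f g => ⟨f.val.mul g.val, by simp [Series.mul_nil, f.val_nil, g.val_nil]⟩⟩

instance : Inv (MagnusGroup α) := ⟨fun f => ⟨f.val.inv, by simp [Series.inv]⟩⟩

theorem mul_val (f g : MagnusGroup α) : (f * g).val = f.val.mul g.val := rfl

variable [DecidableEq α]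

instance : One (MagnusGroup α) := ⟨⟨Series.one, by simp [Series.one]⟩⟩

instance : Group (MagnusGroup α) :=
  Group.ofLeftAxioms (fun f g h => MagnusGroup.ext (Series.mul_assoc f.val g.val h.val))
    (fun f => MagnusGroup.ext (Series.one_mul f.val))
    (fun f => MagnusGroup.ext (Series.inv_mul f.val f.val_nil))

theorem one_val : (1 : MagnusGroup α).val = Series.one := rfl

theorem one_val_apply_of_ne_nil {w : List α} (hw : w ≠ []) : (1 : MagnusGroup α).val w = 0 :=
  Pi.single_eq_of_ne hw _

def letterSubgroup (a : α) : Subgroup (MagnusGroup α) where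
  carrier := {f | f.val.SupportedOnLetter a}
  mul_mem' hf hg := hf.mul hg
  one_mem' w hw b hb := by
    obtain rfl : w = [] := by_contra fun h => hw (Pi.single_eq_of_ne h _)
    simp at hb
  inv_mem' hf := hf.inv

def gen (a : α) : MagnusGroup α := ⟨Pi.single [] 1 + Pi.single [a] 1, by simp⟩

theorem gen_mem_letterSubgroup (a : α) : gen a ∈ letterSubgroup a := fun w hw b hb => by
  by_cases h : w = [a]
  · simp_all
  · obtain rfl : w = [] := by_contra fun h' =>
      hw (by simp [gen, Pi.single_eq_of_ne h, Pi.single_eq_of_ne h'])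
    simp at hb

def singletonCoeffHom (a : α) : MagnusGroup α →* Multiplicative ℤ where
  toFun f := Multiplicative.ofAdd (f.val [a])
  map_one' := by simp [one_val, Series.one]
  map_mul' f g := by
    simp [mul_val, Series.mul_singleton, f.val_nil, g.val_nil, ofAdd_add, mul_comm]

theorem gen_zpow_val_singleton (a : α) (e : ℤ) : (gen a ^ e).val [a] = e := by
  have hgen : singletonCoeffHom a (gen a) = Multiplicative.ofAdd 1 := by
    simp [singletonCoeffHom, gen]
  have := map_zpow (singletonCoeffHom a) (gen a) e
  rw [hgen, ← ofAdd_zsmul, smul_eq_mul, mul_one] at this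
  exact Multiplicative.ofAdd.injective this

theorem val_take_eq_zero {a : α} {f : MagnusGroup α} (hf : f ∈ letterSubgroup a)
    {V : List α} (hV : V.IsChain (· ≠ ·)) {k : ℕ} (hk : 2 ≤ k) (hkV : k ≤ V.length) :
    f.val (V.take k) = 0 := by
  obtain ⟨v₀, v₁, V, rfl⟩ : ∃ v₀ v₁ V', V = v₀ :: v₁ :: V' := by
    match V, hkV with
    | v₀ :: v₁ :: V', _ => exact ⟨_, _, _, rfl⟩
    | [], h | [_], h => simp at h; omega
  obtain ⟨k, rfl⟩ : ∃ j, k = j + 2 := ⟨k - 2, by omega⟩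
  have hne : v₀ ≠ v₁ := (List.isChain_cons_cons.1 hV).1
  rw [List.take_succ_cons, List.take_succ_cons]
  by_cases h₀ : v₀ = a
  · exact Series.SupportedOnLetter.apply_eq_zero hf (b := v₁) (by simp) (h₀ ▸ hne.symm)
  · exact Series.SupportedOnLetter.apply_eq_zero hf (b := v₀) (by simp) h₀

theorem prod_val_eq_zero_of_length_lt (l : List (α × MagnusGroup α))
    (hl : ∀ p ∈ l, p.2 ∈ letterSubgroup p.1) {V : List α} (hV : V.IsChain (· ≠ ·))
    (hlen : l.length < V.length) : (l.map Prod.snd).prod.val V = 0 := by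
  induction l generalizing V with
  | nil => exact one_val_apply_of_ne_nil (List.ne_nil_of_length_pos hlen)
  | cons p l ih =>
    obtain ⟨hp, hl'⟩ := List.forall_mem_cons.1 hl
    simp only [List.map_cons, List.prod_cons, mul_val, Series.mul]
    refine sum_eq_zero fun k hk => ?_
    have hk : k ≤ V.length := Nat.lt_succ_iff.1 (mem_range.1 hk)
    match k, hk with
    | 0, _ => simp [ih hl' hV (by simp at hlen; omega)]
    | 1, _ => rw [ih hl' (by simpa using hV.tail) (by simp at hlen ⊢; omega), mul_zero]
    | k + 2, hk => rw [val_take_eq_zero hp hV (by omega) hk, zero_mul]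

theorem prod_val_map_fst (l : List (α × MagnusGroup α))
    (hl : ∀ p ∈ l, p.2 ∈ letterSubgroup p.1) (hV : (l.map Prod.fst).IsChain (· ≠ ·)) :
    (l.map Prod.snd).prod.val (l.map Prod.fst) = (l.map fun p => p.2.val [p.1]).prod := by
  induction l with
  | nil => simp [one_val, Series.one]
  | cons p l ih =>
    obtain ⟨hp, hl'⟩ := List.forall_mem_cons.1 hl
    simp only [List.map_cons, List.prod_cons, mul_val, Series.mul]
    rw [sum_eq_single 1]
    · simp [ih hl' hV.tail]
    · intro k hk hk1
      have hk : k ≤ l.length + 1 := by simpa [Nat.lt_succ_iff] using hk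
      match k, hk with
      | 0, _ =>
        simp [prod_val_eq_zero_of_length_lt l hl' (V := p.1 :: l.map Prod.fst)
          (by simpa using hV)]
      | k + 2, hk =>
        rw [val_take_eq_zero (V := p.1 :: l.map Prod.fst) hp hV (by omega)
          (by simpa using hk), zero_mul]
    · simp

end Algebra

section Order

variable {α : Type*} [Encodable α]

def wordIndex (w : List α) : ℕ ×ₗ ℕ := toLex (w.length, Encodable.encode w)

theorem wordIndex_injective : Function.Injective (wordIndex : List α → ℕ ×ₗ ℕ) :=
  fun _ _ h => Encodable.encode_injective (congrArg Prod.snd (toLex.injective h))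

theorem length_le_of_wordIndex_le {v w : List α} (h : wordIndex v ≤ wordIndex w) :
    v.length ≤ w.length :=
  (Prod.Lex.toLex_le_toLex'.1 h).1

theorem wordIndex_lt_of_length_lt {v w : List α} (h : v.length < w.length) :
    wordIndex v < wordIndex w :=
  Prod.Lex.toLex_lt_toLex.2 (Or.inl h)

noncomputable def lexCoeffs (f : MagnusGroup α) : Lex (ℕ ×ₗ ℕ → ℤ) :=
  toLex (Function.extend wordIndex f.val 0)

theorem lexCoeffs_wordIndex (f : MagnusGroup α) (w : List α) :
    lexCoeffs f (wordIndex w) = f.val w :=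
  wordIndex_injective.extend_apply _ _ _

theorem lexCoeffs_of_notMem_range (f : MagnusGroup α) {i : ℕ ×ₗ ℕ}
    (hi : i ∉ Set.range (wordIndex (α := α))) : lexCoeffs f i = 0 :=
  Function.extend_apply' _ _ _ hi

theorem lexCoeffs_injective : Function.Injective (lexCoeffs : MagnusGroup α → _) := fun f g h =>
  MagnusGroup.ext (funext fun w => by rw [← lexCoeffs_wordIndex, h, lexCoeffs_wordIndex])

theorem lexCoeffs_mul_lt_lexCoeffs_mul (x : MagnusGroup α) {f g : MagnusGroup α}
    (h : lexCoeffs f < lexCoeffs g) :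
    lexCoeffs (x * f) < lexCoeffs (x * g) := by
  obtain ⟨i, hbelow, hi⟩ := h
  obtain ⟨w, rfl⟩ : i ∈ Set.range (wordIndex (α := α)) := by
    by_contra hi'
    simp [lexCoeffs_of_notMem_range _ hi'] at hi
  have hshort (v : List α) (hv : v.length < w.length) : f.val v = g.val v := by
    simpa [lexCoeffs_wordIndex] using hbelow _ (wordIndex_lt_of_length_lt hv)
  have hmul (v : List α) (hv : wordIndex v ≤ wordIndex w) :
      (x * f).val v - (x * g).val v = f.val v - g.val v := by
    rw [mul_val, mul_val, Series.mul_sub_mul_eq_of_eqOn_shorter _ _ _ fun u hu =>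
      hshort u (hu.trans_le (length_le_of_wordIndex_le hv)), x.val_nil, one_mul]
  refine ⟨wordIndex w, fun j hj => ?_, ?_⟩
  · by_cases hj' : j ∈ Set.range (wordIndex (α := α))
    · obtain ⟨v, rfl⟩ := hj'
      have := hbelow _ hj
      rw [lexCoeffs_wordIndex, lexCoeffs_wordIndex] at this ⊢
      linarith [hmul v hj.le]
    · rw [lexCoeffs_of_notMem_range _ hj', lexCoeffs_of_notMem_range _ hj']
  · rw [lexCoeffs_wordIndex, lexCoeffs_wordIndex] at hi ⊢
    linarith [hmul w le_rfl]

end Order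

end MagnusGroup

namespace FreeGroup

section Syllables

variable {α : Type*}

def IsReducedSyllables (l : List (α × ℤ)) : Prop :=
  (l.map Prod.fst).IsChain (· ≠ ·) ∧ ∀ p ∈ l, p.2 ≠ 0

def syllableProd (l : List (α × ℤ)) : FreeGroup α := (l.map fun p => of p.1 ^ p.2).prod

theorem IsReducedSyllables.exists_zpow_mul {l : List (α × ℤ)} (hl : IsReducedSyllables l)
    (a : α) {s : ℤ} (hs : s ≠ 0) :
    ∃ l', IsReducedSyllables l' ∧ syllableProd l' = of a ^ s * syllableProd l := by
  rcases l with _ | ⟨⟨c, e⟩, r⟩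
  · exact ⟨[(a, s)], ⟨List.isChain_singleton _, by simpa using hs⟩, by simp [syllableProd]⟩
  have hr : IsReducedSyllables r := ⟨hl.1.tail, fun p hp => hl.2 p (by simp [hp])⟩
  by_cases hca : c = a
  · subst hca
    by_cases hse : s + e = 0
    · exact ⟨r, hr, by simp [syllableProd, ← mul_assoc, ← zpow_add, hse]⟩
    · refine ⟨(c, s + e) :: r, ⟨by simpa using hl.1, by simpa [hse] using hr.2⟩, ?_⟩
      simp [syllableProd, ← mul_assoc, ← zpow_add]
  · refine ⟨(a, s) :: (c, e) :: r, ⟨?_, by simpa [hs] using hl.2⟩, by simp [syllableProd]⟩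
    simpa [List.isChain_cons_cons, Ne.symm hca] using hl.1

theorem exists_isReducedSyllables (x : FreeGroup α) :
    ∃ l, IsReducedSyllables l ∧ syllableProd l = x := by
  suffices ∀ y, (∃ l, IsReducedSyllables l ∧ syllableProd l = y) →
      ∃ l, IsReducedSyllables l ∧ syllableProd l = x * y by
    simpa using this 1 ⟨[], ⟨List.isChain_nil, by simp⟩, rfl⟩
  induction x with
  | C1 => simp
  | of a =>
    rintro y ⟨l, hl, rfl⟩
    simpa using hl.exists_zpow_mul a one_ne_zero
  | inv_of a _ =>
    rintro y ⟨l, hl, rfl⟩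
    simpa using hl.exists_zpow_mul a (neg_ne_zero.2 one_ne_zero)
  | mul x y ihx ihy =>
    intro z hz
    simpa [mul_assoc] using ihx _ (ihy z hz)

end Syllables

section Magnus

open MagnusGroup

variable {α : Type*} [DecidableEq α]

def magnus : FreeGroup α →* MagnusGroup α := lift gen

theorem magnus_syllableProd (l : List (α × ℤ)) :
    magnus (syllableProd l) = ((l.map fun p => (p.1, gen p.1 ^ p.2)).map Prod.snd).prod := by
  simp [syllableProd, magnus, map_list_prod, Function.comp_def]

theorem magnus_injective : Function.Injective (magnus : FreeGroup α →* MagnusGroup α) := by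
  refine (injective_iff_map_eq_one _).2 fun x hx => ?_
  obtain ⟨l, ⟨hchain, hne⟩, rfl⟩ := exists_isReducedSyllables x
  by_cases hl : l = []
  · simp [hl, syllableProd]
  set L := l.map fun p => (p.1, gen p.1 ^ p.2)
  have hfst : L.map Prod.fst = l.map Prod.fst := by simp [L, Function.comp_def]
  have hcoeff := prod_val_map_fst L (fun p hp => by
    obtain ⟨q, -, rfl⟩ := List.mem_map.1 hp
    exact zpow_mem (gen_mem_letterSubgroup _) _) (hfst ▸ hchain)
  rw [hfst, ← magnus_syllableProd, hx, one_val_apply_of_ne_nil (by simp [hl])] at hcoeff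
  refine absurd hcoeff.symm (List.prod_ne_zero fun h0 => ?_)
  obtain ⟨p, hp, hp0⟩ := List.mem_map.1 h0
  obtain ⟨q, hq, rfl⟩ := List.mem_map.1 hp
  exact hne q hq (by simpa [gen_zpow_val_singleton] using hp0)

noncomputable def positiveCone [Encodable α] : PositiveCone (FreeGroup α) :=
  PositiveCone.ofStrictMono (fun x => lexCoeffs (magnus x))
    (lexCoeffs_injective.comp magnus_injective)
    fun g a b h => by
      rw [_root_.map_mul, _root_.map_mul]
      exact lexCoeffs_mul_lt_lexCoeffs_mul (magnus g) h

end Magnus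

end FreeGroup
section GroupLemmas

variable {G : Type*} [Group G]

theorem inv_mul_mul_eq_inv_of_mul_mul_inv_eq_inv {x y : G} (h : x * y * x⁻¹ = y⁻¹) :
    x⁻¹ * y * x = y⁻¹ :=
  calc x⁻¹ * y * x = x⁻¹ * (x * y * x⁻¹)⁻¹ * x := by rw [h, inv_inv]
    _ = y⁻¹ := by group

theorem zpow_mul_mul_zpow_neg_eq_or {x y : G} (h : x * y * x⁻¹ = y⁻¹) (k : ℤ) :
    x ^ k * y * x ^ (-k) = y ∨ x ^ k * y * x ^ (-k) = y⁻¹ := by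
  induction k using Int.induction_on with
  | zero => simp
  | succ k ih =>
    have step : x ^ ((k : ℤ) + 1) * y * x ^ (-((k : ℤ) + 1)) =
        x * (x ^ (k : ℤ) * y * x ^ (-(k : ℤ))) * x⁻¹ := by group
    rcases ih with ih | ih <;> rw [step, ih]
    · exact Or.inr h
    · exact Or.inl (by rw [show x * y⁻¹ * x⁻¹ = (x * y * x⁻¹)⁻¹ by group, h, inv_inv])
  | pred k ih =>
    have h' := inv_mul_mul_eq_inv_of_mul_mul_inv_eq_inv h
    have step : x ^ (-(k : ℤ) - 1) * y * x ^ (-(-(k : ℤ) - 1)) =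
        x⁻¹ * (x ^ (-(k : ℤ)) * y * x ^ (-(-(k : ℤ)))) * x := by group
    rcases ih with ih | ih <;> rw [step, ih]
    · exact Or.inr h'
    · exact Or.inl (by rw [show x⁻¹ * y⁻¹ * x = (x⁻¹ * y * x)⁻¹ by group, h', inv_inv])

end GroupLemmas

theorem Multiplicative.ofAdd_one_zpow (k : ℤ) : ofAdd (1 : ℤ) ^ k = ofAdd k := by
  simp [← ofAdd_zsmul]

theorem Multiplicative.closure_ofAdd_one : Subgroup.closure {ofAdd (1 : ℤ)} = ⊤ :=
  eq_top_iff.2 fun x _ => by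
    simpa [ofAdd_one_zpow] using zpow_mem (Subgroup.subset_closure rfl) (toAdd x)
      (K := Subgroup.closure {ofAdd (1 : ℤ)})

namespace SemidirectProduct

variable {N G H : Type*} [Group N] [Group G] [Group H] {φ : G →* MulAut N}

theorem lift_compat_of_closure (f₁ : N →* H) (f₂ : G →* H) {s : Set G} {t : Set N}
    (hs : Subgroup.closure s = ⊤) (ht : Subgroup.closure t = ⊤)
    (h : ∀ g ∈ s, ∀ n ∈ t, f₁ (φ g n) = f₂ g * f₁ n * (f₂ g)⁻¹) (g : G) :
    f₁.comp (φ g).toMonoidHom = (MulAut.conj (f₂ g)).toMonoidHom.comp f₁ := by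
  ext n
  simp only [MonoidHom.comp_apply, MulEquiv.coe_toMonoidHom, MulAut.conj_apply]
  have hg : g ∈ Subgroup.closure s := hs ▸ Subgroup.mem_top g
  induction hg using Subgroup.closure_induction generalizing n with
  | mem g hg =>
    have hgen : f₁.comp (φ g).toMonoidHom = (MulAut.conj (f₂ g)).toMonoidHom.comp f₁ :=
      MonoidHom.eq_of_eqOn_dense ht fun n hn => h g hg n hn
    simpa using DFunLike.congr_fun hgen n
  | one => simp
  | mul g₁ g₂ _ _ ih₁ ih₂ => simp [MulAut.mul_apply, ih₁, ih₂, mul_assoc]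
  | inv g _ ih =>
    have := ih (φ g⁻¹ n)
    rw [← MulAut.mul_apply, ← map_mul, mul_inv_cancel, map_one, MulAut.one_apply,
      map_inv] at this
    rw [map_inv f₂, inv_inv, this]
    simp [mul_assoc]

theorem inr_mul_inl_mul_inv_mul_inl {g : G} {n : N} (h : φ g n = n⁻¹) :
    (inr g : N ⋊[φ] G) * inl n * (inr g)⁻¹ * inl n = 1 := by
  rw [← map_inv, ← inl_aut, h, ← map_mul, inv_mul_cancel, map_one]

end SemidirectProduct

def kleinAction : Multiplicative ℤ →* MulAut (Multiplicative ℤ) :=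
  zpowersHom _ (MulEquiv.inv _)

abbrev KleinBottleGroup : Type := Multiplicative ℤ ⋊[kleinAction] Multiplicative ℤ

namespace KleinBottleGroup

open SemidirectProduct Multiplicative

def a : KleinBottleGroup := inr (ofAdd 1)

def b : KleinBottleGroup := inl (ofAdd 1)

theorem a_mul_b_mul_a_inv_mul_b : a * b * a⁻¹ * b = 1 :=
  inr_mul_inl_mul_inv_mul_inl (by simp [kleinAction])

theorem closure_a_b : Subgroup.closure {a, b} = ⊤ := by
  refine eq_top_iff.2 fun x _ => ?_
  have hx : b ^ toAdd x.left * a ^ toAdd x.right = x := by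
    simp [a, b, ← map_zpow, ofAdd_one_zpow]
  rw [← hx]
  exact Subgroup.mul_mem _ (zpow_mem (Subgroup.subset_closure (by simp [b])) _)
    (zpow_mem (Subgroup.subset_closure (by simp [a])) _)

variable {H : Type*} [Group H]

def lift (x y : H) (h : x * y * x⁻¹ = y⁻¹) : KleinBottleGroup →* H :=
  SemidirectProduct.lift (zpowersHom H y) (zpowersHom H x)
    (lift_compat_of_closure _ _ Multiplicative.closure_ofAdd_one Multiplicative.closure_ofAdd_one
      (by simp [kleinAction, h]))

theorem lift_a (x y : H) (h : x * y * x⁻¹ = y⁻¹) : lift x y h a = x := by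
  simp [lift, a]

theorem lift_b (x y : H) (h : x * y * x⁻¹ = y⁻¹) : lift x y h b = y := by
  simp [lift, b]

def positiveCone : PositiveCone KleinBottleGroup :=
  (Multiplicative.positiveCone ℤ).semidirectProduct (Multiplicative.positiveCone ℤ)

end KleinBottleGroup

namespace FreeGroup

def shiftAut : MulAut (FreeGroup ℤ) := freeGroupCongr (Equiv.addRight 1)

def invGensHom : FreeGroup ℤ →* FreeGroup ℤ := lift fun k => (of k)⁻¹

theorem invGensHom_comp_invGensHom : invGensHom.comp invGensHom = MonoidHom.id (FreeGroup ℤ) :=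
  ext_hom _ _ fun k => by simp [invGensHom]

def invGensAut : MulAut (FreeGroup ℤ) :=
  invGensHom.toMulEquiv invGensHom invGensHom_comp_invGensHom invGensHom_comp_invGensHom

theorem shiftAut_mul_invGensAut_mul_shiftAut_inv :
    shiftAut * invGensAut * shiftAut⁻¹ = invGensAut⁻¹ := by
  refine MulEquiv.toMonoidHom_injective (ext_hom _ _ fun k => ?_)
  simp [shiftAut, invGensAut, invGensHom, MulAut.mul_apply]

end FreeGroup

namespace G₂

open SemidirectProduct FreeGroup

def kleinFreeAction : KleinBottleGroup →* MulAut (FreeGroup ℤ) :=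
  KleinBottleGroup.lift shiftAut invGensAut shiftAut_mul_invGensAut_mul_shiftAut_inv

abbrev Model : Type := FreeGroup ℤ ⋊[kleinFreeAction] KleinBottleGroup

def α : G₂ := PresentedGroup.of 0
def β : G₂ := PresentedGroup.of 1
def γ : G₂ := PresentedGroup.of 2

theorem α_mul_β_mul_α_inv : α * β * α⁻¹ = β⁻¹ :=
  mul_eq_one_iff_eq_inv.1 (PresentedGroup.one_of_mem (Set.mem_insert _ _))

theorem β_mul_γ_mul_β_inv : β * γ * β⁻¹ = γ⁻¹ :=
  mul_eq_one_iff_eq_inv.1 (PresentedGroup.one_of_mem (Set.mem_insert_of_mem _ rfl))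

def modelGens : Fin 3 → Model := ![inr KleinBottleGroup.a, inr KleinBottleGroup.b, inl (of 0)]

def toModel : G₂ →* Model :=
  PresentedGroup.toGroup (f := modelGens) <| by
    rintro r (rfl | rfl)
    · simpa [modelGens, ← map_inv, ← map_mul] using
        congrArg inr KleinBottleGroup.a_mul_b_mul_a_inv_mul_b
    · simp only [_root_.map_mul, _root_.map_inv, lift_apply_of, modelGens,
        Matrix.cons_val_one, Matrix.cons_val_zero, Matrix.cons_val]
      refine inr_mul_inl_mul_inv_mul_inl ?_
      rw [kleinFreeAction, KleinBottleGroup.lift_b]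
      simp [invGensAut, invGensHom]

def freeToG₂ : FreeGroup ℤ →* G₂ := lift fun k => α ^ k * γ * α ^ (-k)

def kleinToG₂ : KleinBottleGroup →* G₂ := KleinBottleGroup.lift α β α_mul_β_mul_α_inv

theorem conj_β_freeToG₂_of (k : ℤ) :
    β * freeToG₂ (of k) * β⁻¹ = (freeToG₂ (of k))⁻¹ := by
  have hconj : ∀ c : G₂, c = β ∨ c = β⁻¹ → c * γ * c⁻¹ = γ⁻¹ := by
    rintro c (rfl | rfl)
    · exact β_mul_γ_mul_β_inv
    · rw [inv_inv]; exact inv_mul_mul_eq_inv_of_mul_mul_inv_eq_inv β_mul_γ_mul_β_inv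
  have hc := hconj _ (zpow_mul_mul_zpow_neg_eq_or α_mul_β_mul_α_inv (-k))
  calc β * freeToG₂ (of k) * β⁻¹
      = α ^ k * ((α ^ (-k) * β * α ^ (-(-k))) * γ * (α ^ (-k) * β * α ^ (-(-k)))⁻¹) *
          α ^ (-k) := by simp [freeToG₂]; group
    _ = (freeToG₂ (of k))⁻¹ := by rw [hc]; simp [freeToG₂]; group

theorem freeToG₂_compat (g : KleinBottleGroup) :
    freeToG₂.comp (kleinFreeAction g).toMonoidHom =
      (MulAut.conj (kleinToG₂ g)).toMonoidHom.comp freeToG₂ := by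
  refine lift_compat_of_closure _ _ KleinBottleGroup.closure_a_b (closure_range_of ℤ) ?_ g
  rintro g (rfl | rfl) _ ⟨k, rfl⟩
  · simp [kleinFreeAction, kleinToG₂, KleinBottleGroup.lift_a, shiftAut, freeToG₂]
    group
  · rw [kleinFreeAction, kleinToG₂, KleinBottleGroup.lift_b, KleinBottleGroup.lift_b,
      conj_β_freeToG₂_of]
    simp [invGensAut, invGensHom]

def ofModel : Model →* G₂ := SemidirectProduct.lift freeToG₂ kleinToG₂ freeToG₂_compat

theorem ofModel_toModel (x : G₂) : ofModel (toModel x) = x := by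
  suffices ofModel.comp toModel = MonoidHom.id G₂ from DFunLike.congr_fun this x
  refine PresentedGroup.ext fun i => ?_
  fin_cases i <;> simp [toModel, modelGens, ofModel, kleinToG₂, KleinBottleGroup.lift_a,
    KleinBottleGroup.lift_b, freeToG₂, α, β, γ]

theorem toModel_injective : Function.Injective toModel :=
  Function.LeftInverse.injective ofModel_toModel

end G₂

/-- `G₂` admits a left-invariant linear order. -/
theorem G₂_left_orderable :
    ∃ _ : LinearOrder G₂, ∀ g h k : G₂, h ≤ k → g * h ≤ g * k :=
  ((FreeGroup.positiveCone.semidirectProduct KleinBottleGroup.positiveCone).comap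
    G₂.toModel G₂.toModel_injective).exists_linearOrder
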